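/- arXiv:2502.09985 — 5 statements merged into one kernel-verified Lean document; each statement's English description precedes it below -/
import Mathlib

section
/- Let S be a real random variable whose quantile function Q(·;S) is locally (γ,L)-Hölder continuous on [1-α-r, 1-α+r] for some r,γ ∈ (0,1], L > 0. Let S_1,...,S_n be i.i.d. copies of S and t̂ the ⌈(n+1)(1-α)⌉-th order statistic, with (n+1)(1-α) not an integer. If (1-α)/n + sqrt(log(2/δ)/(2n)) ≤ r, then with probability at least 1-δ: 2 t̂ ≤ 2 Q(1-α;S) + 2L(1/n + sqrt(log(2/δ)/(2n)))^γ. -/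
open MeasureTheory ProbabilityTheory Real
open scoped Classical

/-- Quantile function `Q(q;S) = inf {t : P(S ≤ t) ≥ q}`. -/
noncomputable def qf {Ω : Type*} [MeasurableSpace Ω] (P : Measure Ω) (S : Ω → ℝ) (q : ℝ) : ℝ :=
  sInf {t : ℝ | q ≤ (P {ω | S ω ≤ t}).toReal}

/-- Empirical quantile `Q̂(q) = inf {t : (1/n) ∑ 1{vᵢ ≤ t} ≥ q}`. -/
noncomputable def empQ {n : ℕ} (v : Fin n → ℝ) (q : ℝ) : ℝ :=
  sInf {t : ℝ | q ≤ ((Finset.univ.filter fun i => v i ≤ t).card : ℝ) / n}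

section Aux

open Filter Set
open scoped Topology

lemma cdf_csInf_ge (μ : Measure ℝ) [IsProbabilityMeasure μ] {q : ℝ} (h0 : 0 < q) (h1 : q < 1) :
    q ≤ cdf μ (sInf {t | q ≤ cdf μ t}) := by
  set A := {t | q ≤ cdf μ t} with hA
  have hne : A.Nonempty := ((tendsto_cdf_atTop μ).eventually_const_le h1).exists
  have hbdd : BddBelow A := by
    obtain ⟨b, hb⟩ := ((tendsto_cdf_atBot μ).eventually_lt_const h0).exists_forall_of_atBot
    exact ⟨b, fun t ht => le_of_not_gt fun htb => absurd ht (not_le.2 (hb t htb.le))⟩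
  set c := sInf A with hc
  have hmono : ∀ x ∈ Ioi c, q ≤ cdf μ x := by
    intro x hx
    obtain ⟨t, htA, htx⟩ := exists_lt_of_csInf_lt hne hx
    exact le_trans htA (monotone_cdf μ htx.le)
  have hrc : Tendsto (cdf μ) (𝓝[>] c) (𝓝 (cdf μ c)) :=
    ((cdf μ).right_continuous c).mono_left (nhdsWithin_mono c Ioi_subset_Ici_self)
  exact ge_of_tendsto hrc (eventually_nhdsWithin_of_forall hmono)

lemma hoeff_mgf (p : ℝ) (h0 : 0 ≤ p) (h1 : p ≤ 1) (s : ℝ) :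
    1 + p * (Real.exp s - 1) ≤ Real.exp (p * s + s ^ 2 / 8) := by
  set D : ℝ → ℝ := fun x => 1 + p * (Real.exp x - 1) with hD
  have hDpos : ∀ x, 0 < D x := by
    intro x
    have h := Real.exp_pos x
    simp only [hD]
    rcases le_or_gt (Real.exp x) 1 with h' | h' <;> nlinarith
  set f : ℝ → ℝ := fun x => p * x + x ^ 2 / 8 - Real.log (D x) with hf
  set g : ℝ → ℝ := fun x => p + x / 4 - p * Real.exp x / D x with hg
  have hDd : ∀ x, HasDerivAt D (p * Real.exp x) x := fun x =>
    (((Real.hasDerivAt_exp x).sub_const 1).const_mul p).const_add 1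
  have hfd : ∀ x, HasDerivAt f (g x) x := by
    intro x
    have h1' : HasDerivAt (fun y : ℝ => p * y) p x := by
      simpa using (hasDerivAt_id x).const_mul p
    have h2' : HasDerivAt (fun y : ℝ => y ^ 2 / 8) (x / 4) x := by
      have h := (hasDerivAt_pow 2 x).div_const 8
      rw [show (((2:ℕ):ℝ) * x ^ (2 - 1) / 8 : ℝ) = x / 4 by norm_num; ring] at h
      exact h
    have h3' : HasDerivAt (fun y => Real.log (D y)) (p * Real.exp x / D x) x :=
      (hDd x).log (hDpos x).ne'
    exact (h1'.add h2').sub h3'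
  have hgd : ∀ x, HasDerivAt g
      (1/4 - (p * Real.exp x * D x - p * Real.exp x * (p * Real.exp x)) / (D x) ^ 2) x := by
    intro x
    have hnum : HasDerivAt (fun y => p * Real.exp y) (p * Real.exp x) x :=
      (Real.hasDerivAt_exp x).const_mul p
    have hdiv := hnum.div (hDd x) (hDpos x).ne'
    have h2' : HasDerivAt (fun y : ℝ => y / 4) (1/4) x := (hasDerivAt_id x).div_const 4
    have := ((hasDerivAt_const x p).add h2').sub hdiv
    rw [zero_add] at this
    exact this
  have hg'nonneg : ∀ x,
      0 ≤ 1/4 - (p * Real.exp x * D x - p * Real.exp x * (p * Real.exp x)) / (D x) ^ 2 := by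
    intro x
    rw [sub_nonneg, div_le_iff₀ (pow_pos (hDpos x) 2)]
    have h := Real.exp_pos x
    simp only [hD]
    nlinarith [sq_nonneg ((1 - p) - p * Real.exp x)]
  have hgmono : Monotone g :=
    monotone_of_deriv_nonneg (fun x => (hgd x).differentiableAt)
      (fun x => by rw [(hgd x).deriv]; exact hg'nonneg x)
  have hg0 : g 0 = 0 := by simp [hg, hD]
  have hf0 : f 0 = 0 := by simp [hf, hD]
  have key : 0 ≤ f s := by
    rcases le_or_gt 0 s with hs | hs
    · have hmono : MonotoneOn f (Set.Ici 0) :=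
        monotoneOn_of_deriv_nonneg (convex_Ici 0)
          (fun x _ => (hfd x).differentiableAt.continuousAt.continuousWithinAt)
          (fun x _ => (hfd x).differentiableAt.differentiableWithinAt)
          (fun x hx => by
            rw [(hfd x).deriv, ← hg0]
            rw [interior_Ici] at hx
            exact hgmono (le_of_lt hx))
      rw [← hf0]
      exact hmono Set.self_mem_Ici hs hs
    · have hanti : AntitoneOn f (Set.Iic 0) :=
        antitoneOn_of_deriv_nonpos (convex_Iic 0)
          (fun x _ => (hfd x).differentiableAt.continuousAt.continuousWithinAt)
          (fun x _ => (hfd x).differentiableAt.differentiableWithinAt)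
          (fun x hx => by
            rw [(hfd x).deriv, ← hg0]
            rw [interior_Iic] at hx
            exact hgmono (le_of_lt hx))
      rw [← hf0]
      exact hanti hs.le Set.self_mem_Iic hs.le
  have hlog : Real.log (D s) ≤ p * s + s ^ 2 / 8 := by
    have h : 0 ≤ p * s + s ^ 2 / 8 - Real.log (D s) := key
    linarith
  calc D s = Real.exp (Real.log (D s)) := (Real.exp_log (hDpos s)).symm
    _ ≤ Real.exp (p * s + s ^ 2 / 8) := Real.exp_le_exp.2 hlog

lemma toReal_compl_prob {Ω : Type*} [MeasurableSpace Ω] (P : Measure Ω) [IsProbabilityMeasure P]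
    {A : Set Ω} (hA : MeasurableSet A) : (P Aᶜ).toReal = 1 - (P A).toReal := by
  rw [prob_compl_eq_one_sub hA, ENNReal.toReal_sub_of_le prob_le_one ENNReal.one_ne_top,
    ENNReal.toReal_one]

end Aux

set_option maxHeartbeats 1000000 in
/-- Under a local `(γ,L)`-Hölder condition on the quantile function, with probability
at least `1-δ`, `2 t̂ ≤ 2 Q(1-α;S) + 2L(1/n + √(log(2/δ)/(2n)))^γ`. -/
theorem stmt1 {Ω : Type*} [MeasurableSpace Ω] (P : Measure Ω) [IsProbabilityMeasure P]
    (S : Ω → ℝ) (hS : Measurable S) (n : ℕ) (hn : 0 < n)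
    (Si : Fin n → Ω → ℝ) (hSi : ∀ i, Measurable (Si i))
    (hindep : iIndepFun Si P)
    (hid : ∀ i, IdentDistrib (Si i) S P P)
    (α δ r γ L : ℝ) (hα : α ∈ Set.Ioo (0:ℝ) 1) (hδ : δ ∈ Set.Ioo (0:ℝ) 1)
    (hr : r ∈ Set.Ioc (0:ℝ) 1) (hγ : γ ∈ Set.Ioc (0:ℝ) 1) (hL : 0 < L)
    (hHolder : ∀ q₁ ∈ Set.Icc (1 - α - r) (1 - α + r), ∀ q₂ ∈ Set.Icc (1 - α - r) (1 - α + r),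
      |qf P S q₁ - qf P S q₂| ≤ L * |q₁ - q₂| ^ γ)
    (hnotint : ∀ k : ℤ, ((n : ℝ) + 1) * (1 - α) ≠ (k : ℝ))
    (hsmall : (1 - α) / n + Real.sqrt (Real.log (2 / δ) / (2 * n)) ≤ r) :
    1 - δ ≤ (P {ω |
        2 * empQ (fun i => Si i ω) ((1 - α) * ((n : ℝ) + 1) / n)
          ≤ 2 * qf P S (1 - α)
            + 2 * L * ((1 : ℝ) / n + Real.sqrt (Real.log (2 / δ) / (2 * n))) ^ γ}).toReal := by
  obtain ⟨hα0, hα1⟩ := hα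
  obtain ⟨hδ0, hδ1⟩ := hδ
  obtain ⟨hγ0, hγ1⟩ := hγ
  obtain ⟨hr0, hr1⟩ := hr
  have hnpos : (0:ℝ) < n := Nat.cast_pos.2 hn
  set ε : ℝ := Real.sqrt (Real.log (2 / δ) / (2 * n)) with hε
  have hlogpos : 0 < Real.log (2 / δ) := by
    apply Real.log_pos
    rw [lt_div_iff₀ hδ0]
    linarith
  have hεpos : 0 < ε := Real.sqrt_pos.2 (by positivity)
  have hεsq : ε ^ 2 = Real.log (2 / δ) / (2 * n) := Real.sq_sqrt (by positivity)
  set d : ℝ := (1:ℝ) / n + ε with hd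
  have hdpos : 0 < d := by positivity
  set qs : ℝ := 1 - α with hqs
  have hqs0 : 0 < qs := by simp only [hqs]; linarith
  have hqs1 : qs < 1 := by simp only [hqs]; linarith
  set qn : ℝ := qs * ((n:ℝ) + 1) / n with hqn
  have hqn_eq : qn = qs + qs / n := by rw [hqn]; field_simp
  have hqn_pos : 0 < qn := by
    rw [hqn_eq]; positivity
  -- cdf machinery
  set μ := P.map S with hμ
  haveI : IsProbabilityMeasure μ := Measure.isProbabilityMeasure_map hS.aemeasurable
  have hFc : ∀ t : ℝ, (P {ω | S ω ≤ t}).toReal = cdf μ t := by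
    intro t
    rw [cdf_eq_real, measureReal_def, hμ, Measure.map_apply hS measurableSet_Iic]
    rfl
  have hqf_eq : ∀ q : ℝ, qf P S q = sInf {t | q ≤ cdf μ t} := by
    intro q
    unfold qf
    congr 1
    ext t
    simp only [Set.mem_setOf_eq, hFc t]
  have hquant : ∀ q : ℝ, 0 < q → q < 1 → q ≤ cdf μ (qf P S q) := by
    intro q hq0 hq1
    rw [hqf_eq]
    exact cdf_csInf_ge μ hq0 hq1
  have hidt : ∀ (i : Fin n) (t : ℝ), P {ω | Si i ω ≤ t} = P {ω | S ω ≤ t} := by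
    intro i t
    have h1 : P {ω | Si i ω ≤ t} = (P.map (Si i)) (Set.Iic t) := by
      rw [Measure.map_apply (hSi i) measurableSet_Iic]; rfl
    rw [h1, (hid i).map_eq, Measure.map_apply hS measurableSet_Iic]; rfl
  -- Hölder helper
  have hqs_mem : qs ∈ Set.Icc (qs - r) (qs + r) := ⟨by linarith, by linarith⟩
  have hHold : ∀ q₁ : ℝ, qs ≤ q₁ → q₁ - qs ≤ d → q₁ - qs ≤ r →
      qf P S q₁ ≤ qf P S qs + L * d ^ γ := by
    intro q₁ h1 h2 h3
    have hmem : q₁ ∈ Set.Icc (qs - r) (qs + r) := ⟨by linarith, by linarith⟩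
    have habs := hHolder q₁ hmem qs hqs_mem
    have h4 : |q₁ - qs| ^ γ ≤ d ^ γ := by
      rw [abs_of_nonneg (by linarith)]
      exact Real.rpow_le_rpow (by linarith) h2 hγ0.le
    have h5 : qf P S q₁ - qf P S qs ≤ L * |q₁ - qs| ^ γ := le_trans (le_abs_self _) habs
    nlinarith [mul_le_mul_of_nonneg_left h4 hL.le]
  -- empirical quantile helper
  have hemp : ∀ (ω : Ω) (t : ℝ),
      qn ≤ ((Finset.univ.filter fun i => Si i ω ≤ t).card : ℝ) / n →
      empQ (fun i => Si i ω) qn ≤ t := by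
    intro ω t ht
    apply csInf_le _ (by exact ht)
    refine ⟨Finset.univ.inf' ⟨⟨0, hn⟩, Finset.mem_univ _⟩ (fun i => Si i ω), ?_⟩
    intro u hu
    have hu' : qn ≤ ((Finset.univ.filter fun i => Si i ω ≤ u).card : ℝ) / n := hu
    have hcard : 0 < (Finset.univ.filter fun i => Si i ω ≤ u).card := by
      rcases Nat.eq_zero_or_pos (Finset.univ.filter fun i => Si i ω ≤ u).card with h | h
      · rw [h] at hu'
        simp only [Nat.cast_zero, zero_div] at hu'
        linarith
      · exact h
    obtain ⟨i, hi⟩ := Finset.card_pos.1 hcard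
    rw [Finset.mem_filter] at hi
    exact le_trans (Finset.inf'_le _ (Finset.mem_univ i)) hi.2
  -- the target event
  have hqn_ne1 : qn ≠ 1 := by
    intro h
    apply hnotint n
    push_cast
    rw [hqn_eq] at h
    have e : qs / (n:ℝ) * n = qs := div_mul_cancel₀ _ hnpos.ne'
    linear_combination (↑n : ℝ) * h - e
  clear_value ε d qs qn μ
  rcases lt_trichotomy qn 1 with hqnlt | hqneq | hqngt
  rotate_left
  · exact absurd hqneq hqn_ne1
  · -- Case 1 : qn > 1, the target event is everything
    have hTuniv : {ω : Ω |
        2 * empQ (fun i => Si i ω) qn ≤ 2 * qf P S qs + 2 * L * d ^ γ} = Set.univ := by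
      ext ω
      simp only [Set.mem_setOf_eq, Set.mem_univ, iff_true]
      have hempty : {t : ℝ | qn ≤ ((Finset.univ.filter fun i => Si i ω ≤ t).card : ℝ) / n} = ∅ := by
        ext t
        simp only [Set.mem_setOf_eq, Set.mem_empty_iff_false, iff_false, not_le]
        have hcard : ((Finset.univ.filter fun i => Si i ω ≤ t).card : ℝ) ≤ n := by
          exact_mod_cast (Finset.card_filter_le _ _).trans_eq (Finset.card_univ.trans (Fintype.card_fin n))
        calc ((Finset.univ.filter fun i => Si i ω ≤ t).card : ℝ) / n ≤ 1 := by
              rw [div_le_one hnpos]; exact hcard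
          _ < qn := hqngt
      have hempQ : empQ (fun i => Si i ω) qn = 0 := by
        unfold empQ
        rw [hempty, Real.sInf_empty]
      rw [hempQ]
      -- need 0 ≤ 2 * qf P S qs + 2 * L * d ^ γ
      have hα_lt : α < qs / n := by
        have : 1 < qs + qs / n := hqn_eq ▸ hqngt
        simp only [hqs] at this ⊢
        linarith
      have hrα : α + ε < r := by linarith [hsmall]
      obtain ⟨θ, hθpos, hθε, hθr⟩ : ∃ θ : ℝ, 0 < θ ∧ θ ≤ ε / 2 ∧ θ ≤ (r - α) / 2 := by
        refine ⟨min (r - α) ε / 2, ?_, ?_, ?_⟩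
        · have : 0 < min (r - α) ε := lt_min (by linarith) hεpos
          positivity
        · have := min_le_right (r - α) ε; linarith
        · have := min_le_left (r - α) ε; linarith
      set q₁ : ℝ := 1 + θ with hq₁
      clear_value q₁
      have hq₁gt : 1 < q₁ := by rw [hq₁]; linarith
      have hqf₁ : qf P S q₁ = 0 := by
        rw [hqf_eq]
        have : {t : ℝ | q₁ ≤ cdf μ t} = ∅ := by
          ext t
          simp only [Set.mem_setOf_eq, Set.mem_empty_iff_false, iff_false, not_le]
          exact lt_of_le_of_lt (cdf_le_one μ t) hq₁gt
        rw [this, Real.sInf_empty]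
      have hmem : q₁ ∈ Set.Icc (qs - r) (qs + r) := by
        constructor
        · rw [hq₁, hqs]; linarith
        · rw [hq₁, hqs]; linarith
      have habs := hHolder q₁ hmem qs hqs_mem
      rw [hqf₁] at habs
      have hd1 : |q₁ - qs| = α + θ := by
        rw [abs_of_nonneg]
        · simp only [hq₁, hqs]; ring
        · simp only [hq₁, hqs]; linarith
      have hq1d : α + θ ≤ d := by
        have hqsn : qs / n ≤ 1 / n := by gcongr
        linarith [hα_lt, hθε, hqsn, hεpos, hd]
      have h4 : |q₁ - qs| ^ γ ≤ d ^ γ := by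
        rw [hd1]
        exact Real.rpow_le_rpow (by linarith) hq1d hγ0.le
      have h5 : -(qf P S qs) ≤ L * d ^ γ := by
        have h6 : -(qf P S qs) ≤ |0 - qf P S qs| := by
          rw [zero_sub, abs_neg]
          exact neg_le_abs _
        calc -(qf P S qs) ≤ L * |q₁ - qs| ^ γ := h6.trans habs
          _ ≤ L * d ^ γ := mul_le_mul_of_nonneg_left h4 hL.le
      linarith
    rw [hTuniv]
    simp only [measure_univ, ENNReal.toReal_one]
    linarith
  · -- qn < 1 : probabilistic cases
    have hsubset : ∀ tstar : ℝ, tstar ≤ qf P S qs + L * d ^ γ →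
        ∀ ω : Ω, qn ≤ ((Finset.univ.filter fun i => Si i ω ≤ tstar).card : ℝ) / n →
        ω ∈ {ω : Ω | 2 * empQ (fun i => Si i ω) qn ≤ 2 * qf P S qs + 2 * L * d ^ γ} := by
      intro t ht ω hω
      have h1 := hemp ω t hω
      simp only [Set.mem_setOf_eq]
      linarith
    have hqsn : qs / n ≤ 1 / n := by gcongr
    rcases lt_or_ge (qn + ε) 1 with hcase | hcase
    · -- Case 3 : Hoeffding-type concentration
      have hq₁pos : 0 < qn + ε := by linarith
      have hp : qn + ε ≤ cdf μ (qf P S (qn + ε)) := hquant _ hq₁pos hcase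
      set tstar : ℝ := qf P S (qn + ε) with htstar
      set p : ℝ := cdf μ tstar with hpdef
      have hp0 : 0 ≤ p := cdf_nonneg μ tstar
      have hp1 : p ≤ 1 := cdf_le_one μ tstar
      have hqsd : 0 < qs / n := div_pos hqs0 hnpos
      have htle : tstar ≤ qf P S qs + L * d ^ γ := by
        rw [htstar]
        refine hHold (qn + ε) (by rw [hqn_eq] at *; linarith) ?_ ?_
        · rw [hqn_eq] at *; linarith
        · rw [hqn_eq] at *; linarith
      set Y : Fin n → Ω → ℝ := fun i ω => if Si i ω ≤ tstar then (1:ℝ) else 0 with hY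
      have hgmeas : Measurable (fun x : ℝ => if x ≤ tstar then (1:ℝ) else 0) :=
        Measurable.ite measurableSet_Iic measurable_const measurable_const
      have hYmeas : ∀ i, Measurable (Y i) := fun i => hgmeas.comp (hSi i)
      have hYindep : iIndepFun Y P :=
        hindep.comp (fun _ x => if x ≤ tstar then (1:ℝ) else 0) (fun _ => hgmeas)
      have hsetmeas : ∀ i : Fin n, MeasurableSet {ω : Ω | Si i ω ≤ tstar} :=
        fun i => measurableSet_le (hSi i) measurable_const
      have hPi : ∀ i : Fin n, (P {ω | Si i ω ≤ tstar}).toReal = p := by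
        intro i; rw [hidt i, hFc]
      have hmgfY : ∀ (i : Fin n) (s : ℝ), mgf (Y i) P s = 1 + p * (Real.exp s - 1) := by
        intro i s
        have heq : (fun ω => Real.exp (s * Y i ω))
            = fun ω => ({ω : Ω | Si i ω ≤ tstar}.indicator
                (fun _ => Real.exp s - 1) ω) + 1 := by
          funext ω
          by_cases h : Si i ω ≤ tstar
          · rw [Set.indicator_of_mem (by exact h : ω ∈ {ω : Ω | Si i ω ≤ tstar})]
            simp only [hY, if_pos h, mul_one]
            ring
          · rw [Set.indicator_of_notMem (by exact h : ω ∉ {ω : Ω | Si i ω ≤ tstar})]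
            simp only [hY, if_neg h, mul_zero, Real.exp_zero]
            ring
        have hmgf_def : mgf (Y i) P s = ∫ ω, Real.exp (s * Y i ω) ∂P := rfl
        rw [hmgf_def, heq, integral_add ((integrable_const (Real.exp s - 1)).indicator
          (hsetmeas i)) (integrable_const 1), integral_indicator_const _ (hsetmeas i),
          integral_const, measureReal_def, measureReal_def, hPi i]
        simp only [measure_univ, ENNReal.toReal_one, smul_eq_mul]
        ring
      have hsum_eq : ∀ ω : Ω, (∑ i, Y i) ω
          = ((Finset.univ.filter fun i => Si i ω ≤ tstar).card : ℝ) := by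
        intro ω
        rw [Finset.sum_apply]
        simp only [hY]
        rw [Finset.sum_boole]
      have hsum_nonneg : ∀ ω : Ω, 0 ≤ (∑ i, Y i) ω := by
        intro ω
        rw [Finset.sum_apply]
        apply Finset.sum_nonneg
        intro i _
        simp only [hY]
        split <;> norm_num
      have hsummeas : Measurable (∑ i, Y i) := by
        have he : (∑ i, Y i) = fun ω => ∑ i, Y i ω := by
          funext ω; simp [Finset.sum_apply]
        rw [he]
        exact Finset.measurable_sum _ fun i _ => hYmeas i
      have hint : Integrable (fun ω => Real.exp ((-(4*ε)) * (∑ i, Y i) ω)) P := by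
        apply Integrable.mono' (integrable_const (1:ℝ))
        · exact ((hsummeas.const_mul _).exp).aestronglyMeasurable
        · apply Filter.Eventually.of_forall
          intro ω
          rw [Real.norm_eq_abs, abs_of_pos (Real.exp_pos _)]
          have h1 : (-(4*ε)) * (∑ i, Y i) ω ≤ 0 :=
            mul_nonpos_of_nonpos_of_nonneg (by linarith) (hsum_nonneg ω)
          calc Real.exp ((-(4*ε)) * (∑ i, Y i) ω) ≤ Real.exp 0 := Real.exp_le_exp.2 h1
            _ = 1 := Real.exp_zero
      have hchern := measure_le_le_exp_mul_mgf (μ := P) (X := ∑ i, Y i)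
        ((n:ℝ) * (p - ε)) (t := -(4*ε)) (by linarith) hint
      rw [hYindep.mgf_sum hYmeas Finset.univ] at hchern
      have hprod : (∏ i : Fin n, mgf (Y i) P (-(4*ε)))
          = (1 + p * (Real.exp (-(4*ε)) - 1)) ^ n := by
        rw [Finset.prod_congr rfl (fun i _ => hmgfY i _), Finset.prod_const,
          Finset.card_univ, Fintype.card_fin]
      have hbase0 : 0 ≤ 1 + p * (Real.exp (-(4*ε)) - 1) := by
        have h := Real.exp_pos (-(4*ε))
        rcases le_or_gt (Real.exp (-(4*ε))) 1 with h' | h' <;> nlinarith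
      have hkey : (1 + p * (Real.exp (-(4*ε)) - 1)) ^ n
          ≤ Real.exp ((n:ℝ) * (p * (-(4*ε)) + (-(4*ε))^2/8)) := by
        rw [Real.exp_nat_mul]
        exact pow_le_pow_left₀ hbase0 (hoeff_mgf p hp0 hp1 (-(4*ε))) n
      have hfinal : (P {ω | (∑ i, Y i) ω ≤ (n:ℝ) * (p - ε)}).toReal ≤ δ / 2 := by
        have h2 : Real.exp (-(-(4*ε)) * ((n:ℝ) * (p - ε)))
              * Real.exp ((n:ℝ) * (p * (-(4*ε)) + (-(4*ε))^2/8))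
            = Real.exp (-(2 * n * ε^2)) := by
          rw [← Real.exp_add]
          congr 1
          ring
        have h3 : Real.exp (-(2*(n:ℝ)*ε^2)) = δ / 2 := by
          have h4 : 2 * (n:ℝ) * ε ^ 2 = Real.log (2/δ) := by
            rw [hεsq]
            field_simp
          rw [h4, Real.exp_neg, Real.exp_log (by positivity), inv_div]
        calc (P {ω | (∑ i, Y i) ω ≤ (n:ℝ) * (p - ε)}).toReal
            ≤ Real.exp (-(-(4*ε)) * ((n:ℝ) * (p - ε)))
              * ∏ i : Fin n, mgf (Y i) P (-(4*ε)) := hchern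
          _ ≤ Real.exp (-(-(4*ε)) * ((n:ℝ) * (p - ε)))
              * Real.exp ((n:ℝ) * (p * (-(4*ε)) + (-(4*ε))^2/8)) := by
              rw [hprod]
              exact mul_le_mul_of_nonneg_left hkey (Real.exp_pos _).le
          _ = δ / 2 := by rw [h2, h3]
      set B : Set Ω := {ω | (∑ i, Y i) ω ≤ (n:ℝ) * (p - ε)} with hB
      have hBmeas : MeasurableSet B := measurableSet_le hsummeas measurable_const
      have hBsub : Bᶜ ⊆ {ω : Ω |
          2 * empQ (fun i => Si i ω) qn ≤ 2 * qf P S qs + 2 * L * d ^ γ} := by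
        intro ω hω
        apply hsubset tstar htle ω
        have hlt : (n:ℝ) * (p - ε) < (∑ i, Y i) ω := not_le.1 hω
        rw [← hsum_eq ω, le_div_iff₀ hnpos]
        nlinarith [mul_le_mul_of_nonneg_left (show qn ≤ p - ε by linarith) hnpos.le]
      calc 1 - δ ≤ 1 - δ/2 := by linarith
        _ ≤ (P Bᶜ).toReal := by
            rw [toReal_compl_prob P hBmeas]
            linarith [hfinal]
        _ ≤ _ := ENNReal.toReal_mono (measure_ne_top _ _) (measure_mono hBsub)
    · -- Case 2 : the quantile level reaches beyond 1 - ε; probability ≈ 1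
      obtain ⟨η, hηpos, hηα, hηδ⟩ : ∃ η : ℝ, 0 < η ∧ η < α ∧ (n:ℝ) * η ≤ δ / 2 := by
        refine ⟨min (δ / (2 * n)) (α / 2), lt_min (by positivity) (by linarith), ?_, ?_⟩
        · have := min_le_right (δ / (2 * n)) (α / 2); linarith
        · have h1 := min_le_left (δ / (2 * n)) (α / 2)
          have h2 : (n:ℝ) * (δ / (2 * n)) = δ / 2 := by field_simp
          nlinarith [hnpos]
      have hq1lt : 1 - η < 1 := by linarith
      have hq1pos : 0 < 1 - η := by linarith
      have hp : 1 - η ≤ cdf μ (qf P S (1 - η)) := hquant _ hq1pos hq1lt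
      set tstar : ℝ := qf P S (1 - η) with htstar
      have hαd : α ≤ qs / n + ε := by
        rw [hqn_eq] at hcase
        linarith [hqs]
      have htle : tstar ≤ qf P S qs + L * d ^ γ := by
        rw [htstar]
        refine hHold (1 - η) (by linarith [hqs]) ?_ ?_
        · linarith [hqs, hd]
        · linarith [hqs, hsmall]
      set A : Set Ω := ⋂ i, {ω : Ω | Si i ω ≤ tstar} with hA
      have hAmeas : MeasurableSet A :=
        MeasurableSet.iInter fun i => measurableSet_le (hSi i) measurable_const
      have hAsub : A ⊆ {ω : Ω |
          2 * empQ (fun i => Si i ω) qn ≤ 2 * qf P S qs + 2 * L * d ^ γ} := by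
        intro ω hω
        apply hsubset tstar htle ω
        have hfilter : (Finset.univ.filter fun i => Si i ω ≤ tstar) = Finset.univ := by
          apply Finset.filter_true_of_mem
          intro i _
          exact Set.mem_iInter.1 hω i
        rw [hfilter, Finset.card_univ, Fintype.card_fin, div_self hnpos.ne']
        exact hqnlt.le
      have hterm : ∀ i : Fin n, (P ({ω : Ω | Si i ω ≤ tstar}ᶜ)).toReal ≤ η := by
        intro i
        rw [toReal_compl_prob P (measurableSet_le (hSi i) measurable_const)]
        have h1 : (P {ω | Si i ω ≤ tstar}).toReal = cdf μ tstar := by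
          rw [hidt i, hFc]
        rw [h1]
        linarith
      have hcompl : (P Aᶜ).toReal ≤ (n:ℝ) * η := by
        have hle : P Aᶜ ≤ ∑ i : Fin n, P ({ω : Ω | Si i ω ≤ tstar}ᶜ) := by
          rw [hA, Set.compl_iInter]
          exact measure_iUnion_fintype_le _ _
        calc (P Aᶜ).toReal ≤ (∑ i : Fin n, P ({ω : Ω | Si i ω ≤ tstar}ᶜ)).toReal := by
              apply ENNReal.toReal_mono ?_ hle
              exact ENNReal.sum_ne_top.2 fun i _ => measure_ne_top _ _
          _ = ∑ i : Fin n, (P ({ω : Ω | Si i ω ≤ tstar}ᶜ)).toReal :=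
              ENNReal.toReal_sum fun i _ => measure_ne_top _ _
          _ ≤ ∑ _i : Fin n, η := Finset.sum_le_sum fun i _ => hterm i
          _ = (n:ℝ) * η := by
              rw [Finset.sum_const, Finset.card_univ, Fintype.card_fin, nsmul_eq_mul]
      calc 1 - δ ≤ 1 - (n:ℝ) * η := by linarith
        _ ≤ (P A).toReal := by
            have h1 := toReal_compl_prob P hAmeas
            linarith [hcompl]
        _ ≤ _ := ENNReal.toReal_mono (measure_ne_top _ _) (measure_mono hAsub)
end

section
/- Consider the empirical minimum volume problem: minimize t over f ∈ F and t ≥ 0 subject to (1/n)∑_{i=1}^n 1{|Y_i − f(X_i)| ≤ t} ≥ 1−α, with solution (f̂, t̂). Let (f*_{1−α+φ}, t*_{1−α+φ}) solve the population problem: minimize t subject to P(|Y − f(X)| ≤ t) ≥ 1−α+φ. On the event that sup_{f∈F, t≥0} |P(|Y−f(X)| ≤ t) − (1/n)∑ 1{|Y_i − f(X_i)| ≤ t}| ≤ φ, we have both (i) P(|Y − f̂(X)| ≤ t̂ | data) ≥ 1−α−φ and (ii) t̂ ≤ t*_{1−α+φ}. -/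
open MeasureTheory ProbabilityTheory Real
open scoped Classical

/-- Empirical coverage of `(f,t)` over data `(x i, y i)`. -/
noncomputable def empCov {𝒳 : Type*} {n : ℕ} (x : Fin n → 𝒳) (y : Fin n → ℝ)
    (f : 𝒳 → ℝ) (t : ℝ) : ℝ :=
  ((Finset.univ.filter fun i => |y i - f (x i)| ≤ t).card : ℝ) / n

/-- Population coverage of `(f,t)`. -/
noncomputable def popCov {Ω 𝒳 : Type*} [MeasurableSpace Ω] (P : Measure Ω)
    (X : Ω → 𝒳) (Y : Ω → ℝ) (f : 𝒳 → ℝ) (t : ℝ) : ℝ :=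
  (P {ω | |Y ω - f (X ω)| ≤ t}).toReal

/-- On the event that the uniform deviation is at most `φ`, the empirical volume minimizer
`(f̂, t̂)` has population coverage at least `1-α-φ`, and `t̂ ≤ t*_{1-α+φ}`, the oracle radius
at level `1-α+φ`. -/
theorem stmt6 {Ω 𝒳 : Type*} [MeasurableSpace Ω] [MeasurableSpace 𝒳]
    (P : Measure Ω) [IsProbabilityMeasure P]
    (X : Ω → 𝒳) (Y : Ω → ℝ) (F : Set (𝒳 → ℝ))
    (n : ℕ) (hn : 0 < n) (x : Fin n → 𝒳) (y : Fin n → ℝ)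
    (α φ : ℝ) (hα : α ∈ Set.Ioo (0:ℝ) 1) (hφ : 0 ≤ φ)
    (fhat : 𝒳 → ℝ) (that : ℝ) (hfhatF : fhat ∈ F) (hthat : 0 ≤ that)
    (hfeas : 1 - α ≤ empCov x y fhat that)
    (hmin : ∀ f ∈ F, ∀ t : ℝ, 0 ≤ t → 1 - α ≤ empCov x y f t → that ≤ t)
    (fstar : 𝒳 → ℝ) (tstar : ℝ) (hfstarF : fstar ∈ F) (htstar : 0 ≤ tstar)
    (hfeas' : 1 - α + φ ≤ popCov P X Y fstar tstar)
    (hmin' : ∀ f ∈ F, ∀ t : ℝ, 0 ≤ t → 1 - α + φ ≤ popCov P X Y f t → tstar ≤ t)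
    (hdev : ∀ f ∈ F, ∀ t : ℝ, 0 ≤ t → |popCov P X Y f t - empCov x y f t| ≤ φ) :
    1 - α - φ ≤ popCov P X Y fhat that ∧ that ≤ tstar := by
  have h1 := hdev fhat hfhatF that hthat
  have h2 := hdev fstar hfstarF tstar htstar
  rw [abs_le] at h1 h2
  constructor
  · linarith [h1.2]
  · exact hmin fstar hfstarF tstar htstar (by linarith [h2.1])
end

section
/- Under the setting of the empirical minimum volume problem (with uniform deviation bound φ on the event E) assume additionally the quantile function of S_f = |Y − f(X)| is locally (γ,L)-Hölder on [1−α−r, 1−α+r] for every f ∈ F, with φ ≤ r. Let f* minimize Q(1−α; |Y−f(X)|) over f ∈ F with t* = Q(1−α; |Y−f*(X)|), and let (f*_{1−α+φ}, t*_{1−α+φ}) be the oracle at level 1−α+φ. Then t*_{1−α+φ} − t* ≤ L φ^γ. -/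
open MeasureTheory Real

/-- If `f*` minimizes the `(1-α)`-quantile of the absolute error over `F`,
`f*_{1-α+φ}` minimizes the `(1-α+φ)`-quantile, and the quantile function of `|Y - f(X)|`
is locally `(γ,L)`-Hölder on `[1-α-r, 1-α+r]` for every `f ∈ F`, with `0 ≤ φ ≤ r`, then
`t*_{1-α+φ} - t* ≤ L φ^γ`. -/
theorem stmt7 {Ω 𝒳 : Type*} [MeasurableSpace Ω] [MeasurableSpace 𝒳]
    (P : Measure Ω) [IsProbabilityMeasure P]
    (X : Ω → 𝒳) (Y : Ω → ℝ) (F : Set (𝒳 → ℝ))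
    (α φ r γ L : ℝ) (hα : α ∈ Set.Ioo (0:ℝ) 1)
    (hr : r ∈ Set.Ioc (0:ℝ) 1) (hγ : γ ∈ Set.Ioc (0:ℝ) 1) (hL : 0 < L)
    (hφ : 0 ≤ φ) (hφr : φ ≤ r)
    (hHolder : ∀ f ∈ F, ∀ q₁ ∈ Set.Icc (1 - α - r) (1 - α + r),
      ∀ q₂ ∈ Set.Icc (1 - α - r) (1 - α + r),
      |qf P (fun ω => |Y ω - f (X ω)|) q₁ - qf P (fun ω => |Y ω - f (X ω)|) q₂|
        ≤ L * |q₁ - q₂| ^ γ)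
    (fstar : 𝒳 → ℝ) (hfstarF : fstar ∈ F)
    (hminstar : ∀ f ∈ F, qf P (fun ω => |Y ω - fstar (X ω)|) (1 - α)
      ≤ qf P (fun ω => |Y ω - f (X ω)|) (1 - α))
    (fphi : 𝒳 → ℝ) (hfphiF : fphi ∈ F)
    (hminphi : ∀ f ∈ F, qf P (fun ω => |Y ω - fphi (X ω)|) (1 - α + φ)
      ≤ qf P (fun ω => |Y ω - f (X ω)|) (1 - α + φ)) :
    qf P (fun ω => |Y ω - fphi (X ω)|) (1 - α + φ)
      - qf P (fun ω => |Y ω - fstar (X ω)|) (1 - α) ≤ L * φ ^ γ := by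
  have h1 := hminphi fstar hfstarF
  have h2 := hHolder fstar hfstarF (1 - α + φ)
    ⟨by linarith, by linarith⟩ (1 - α) ⟨by linarith [hr.1], by linarith [hr.1]⟩
  have h3 : |1 - α + φ - (1 - α)| = φ := by rw [abs_of_nonneg] <;> [ring_nf; linarith]
  rw [h3] at h2
  have := abs_le.mp h2
  linarith [this.2]
end

section
/- Let S₁,...,S_{n_c} be exchangeable with S = S_{n_c+1} (all continuous real random variables, almost surely distinct). Let t̂ = S_{(⌈(n_c+1)(1−α)⌉)} be the ⌈(n_c+1)(1−α)⌉-th order statistic of S₁,...,S_{n_c} (with t̂ = +∞ if ⌈(n_c+1)(1−α)⌉ > n_c). Then 1−α ≤ P(S_{n_c+1} ≤ t̂) ≤ 1−α + 1/(n_c+1). -/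
open MeasureTheory ProbabilityTheory Real
open scoped Classical
open scoped ENNReal

/-- The `k`-th order statistic (1-indexed) of `v : Fin n → ℝ`. -/
noncomputable def orderStat {n : ℕ} (v : Fin n → ℝ) (k : ℕ) : ℝ :=
  (((List.ofFn v).mergeSort (fun a b => decide (a ≤ b)))).getD (k - 1) 0


lemma sorted_le_getD_iff {l : List ℝ} (hl : l.Pairwise (· ≤ ·)) {k : ℕ}
    (hk1 : 1 ≤ k) (hk2 : k ≤ l.length) (x : ℝ) :
    x ≤ l.getD (k - 1) 0 ↔ l.countP (fun a => decide (a < x)) ≤ k - 1 := by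
  induction l generalizing k with
  | nil => simp at hk2; omega
  | cons a t ih =>
    rw [List.pairwise_cons] at hl
    obtain ⟨ha, ht⟩ := hl
    rcases Nat.eq_or_lt_of_le hk1 with h1 | h1
    · -- k = 1
      rcases h1
      simp only [Nat.sub_self, List.getD_cons_zero, List.countP_cons, Nat.le_zero]
      constructor
      · intro hxa
        have hc : t.countP (fun a => decide (a < x)) = 0 := by
          rw [List.countP_eq_zero]
          intro b hb
          simp only [decide_eq_true_eq]
          exact not_lt.2 (le_trans hxa (ha b hb))
        simp [hc, not_lt.2 hxa]
      · intro h
        by_contra hxa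
        simp [lt_of_not_ge hxa] at h
    · -- k ≥ 2
      have hk' : 2 ≤ k := h1
      have hkk : k - 1 = (k - 2) + 1 := by omega
      rw [hkk]
      simp only [List.getD_cons_succ, List.countP_cons]
      by_cases hax : a < x
      · have hx : (decide (a < x) : Bool) = true := by simpa using hax
        rw [hx]
        have := ih ht (k := k - 1) (by omega) (by simp at hk2 ⊢; omega)
        have h2 : k - 1 - 1 = k - 2 := by omega
        rw [h2] at this
        rw [this]
        simp only [if_true]
        omega
      · constructor
        · intro _
          have hc : t.countP (fun a => decide (a < x)) = 0 := by
            rw [List.countP_eq_zero]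
            intro b hb
            simp only [decide_eq_true_eq]
            exact not_lt.2 (le_trans (not_lt.1 hax) (ha b hb))
          simp [hc, hax]
        · intro _
          have hmem : t.getD (k - 2) 0 ∈ t := by
            rw [List.getD_eq_getElem?_getD]
            have hlt : k - 2 < t.length := by simp at hk2; omega
            rw [List.getElem?_eq_getElem hlt]
            simp [List.getElem_mem]
          exact le_trans (le_trans (not_lt.1 hax) (ha _ hmem)) (le_refl _)


lemma countP_ofFn (n : ℕ) (v : Fin n → ℝ) (p : ℝ → Bool) :
    (List.ofFn v).countP p = (Finset.univ.filter fun i => p (v i)).card := by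
  classical
  rw [List.ofFn_eq_map, List.countP_map]
  rw [Fin.univ_def]
  simp only [Finset.filter, Finset.card, Multiset.filter_coe, Multiset.coe_card,
    List.countP_eq_length_filter]
  congr 1
  apply List.filter_congr
  intro i _
  simp [Function.comp]

lemma orderStat_iff (n k : ℕ) (v : Fin (n+1) → ℝ) (hv : Function.Injective v)
    (hk1 : 1 ≤ k) (hk2 : k ≤ n) :
    (v (Fin.last n) ≤ orderStat (fun i : Fin n => v i.castSucc) k ↔
      (Finset.univ.filter fun i => v i ≤ v (Fin.last n)).card ≤ k) := by
  set w : Fin n → ℝ := fun i => v i.castSucc with hw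
  set x : ℝ := v (Fin.last n) with hx
  set l : List ℝ := (List.ofFn w).mergeSort (fun a b => decide (a ≤ b)) with hl
  have hsort : l.Pairwise (· ≤ ·) := by
    have h := List.pairwise_mergeSort (le := fun a b : ℝ => decide (a ≤ b))
      (fun a b c hab hbc => by simp only [decide_eq_true_eq] at *; exact le_trans hab hbc)
      (fun a b => by simp [le_total]) (List.ofFn w)
    simpa [List.Pairwise] using h
  have hlen : l.length = n := by simp [hl]
  have hperm : l.Perm (List.ofFn w) := List.mergeSort_perm _ _
  have hcount : l.countP (fun a => decide (a < x)) =
      (Finset.univ.filter fun i : Fin n => w i < x).card := by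
    rw [hperm.countP_eq, countP_ofFn]
    simp
  have hiff := sorted_le_getD_iff hsort hk1 (by omega : k ≤ l.length) x
  have hcard : (Finset.univ.filter fun i : Fin (n+1) => v i ≤ x).card =
      (Finset.univ.filter fun i : Fin n => w i < x).card + 1 := by
    have hA : (Finset.univ.filter fun i : Fin (n+1) => v i ≤ x) =
        insert (Fin.last n) ((Finset.univ.filter fun i : Fin n => w i < x).image Fin.castSucc) := by
      ext i
      simp only [Finset.mem_filter, Finset.mem_univ, true_and, Finset.mem_insert,
        Finset.mem_image]
      constructor
      · intro hi
        by_cases hlast : i = Fin.last n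
        · exact Or.inl hlast
        · obtain ⟨j, rfl⟩ := Fin.exists_castSucc_eq.2 hlast
          refine Or.inr ⟨j, ⟨?_, rfl⟩⟩
          rcases lt_or_eq_of_le hi with h | h
          · exact h
          · exact absurd (hv h) (Fin.castSucc_lt_last j).ne
      · rintro (rfl | ⟨j, hj, rfl⟩)
        · exact le_refl _
        · exact le_of_lt hj
    rw [hA, Finset.card_insert_of_notMem, Finset.card_image_of_injective _ (Fin.castSucc_injective n)]
    simp only [Finset.mem_image]
    rintro ⟨j, _, hj⟩
    exact absurd hj (Fin.castSucc_lt_last j).ne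
  rw [orderStat]
  rw [← hl]  -- orderStat unfolds to l.getD (k-1) 0
  rw [hiff, hcount, hcard]
  omega

lemma rank_filter_card (n k : ℕ) (v : Fin (n+1) → ℝ) (hv : Function.Injective v)
    (hk : k ≤ n + 1) :
    (Finset.univ.filter fun j =>
      (Finset.univ.filter fun i => v i ≤ v j).card ≤ k).card = k := by
  set r : Fin (n+1) → ℕ := fun j => (Finset.univ.filter fun i => v i ≤ v j).card with hr
  have hmono : ∀ j j', v j < v j' → r j < r j' := by
    intro j j' hlt
    apply Finset.card_lt_card
    constructor
    · intro i hi
      simp only [Finset.mem_filter, Finset.mem_univ, true_and] at *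
      exact le_of_lt (lt_of_le_of_lt hi hlt)
    · intro hsub
      have := hsub (by simp : j' ∈ Finset.univ.filter fun i => v i ≤ v j')
      simp only [Finset.mem_filter, Finset.mem_univ, true_and] at this
      exact absurd this (not_le.2 hlt)
  have hinj : Function.Injective r := by
    intro j j' h
    by_contra hne
    rcases lt_trichotomy (v j) (v j') with hlt | heq | hlt
    · exact absurd h (hmono j j' hlt).ne
    · exact hne (hv heq)
    · exact absurd h.symm (hmono j' j hlt).ne
  have himg : Finset.univ.image r = Finset.Icc 1 (n+1) := by
    apply Finset.eq_of_subset_of_card_le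
    · intro m hm
      simp only [Finset.mem_image] at hm
      obtain ⟨j, _, rfl⟩ := hm
      rw [Finset.mem_Icc]
      constructor
      · have : j ∈ Finset.univ.filter fun i => v i ≤ v j := by simp
        exact Finset.card_pos.2 ⟨j, this⟩
      · calc r j ≤ (Finset.univ : Finset (Fin (n+1))).card := Finset.card_filter_le _ _
          _ = n + 1 := Finset.card_fin _
    · rw [Finset.card_image_of_injective _ hinj, Nat.card_Icc, Finset.card_fin]; omega
  calc (Finset.univ.filter fun j => r j ≤ k).card
      = ((Finset.univ.filter fun j => r j ≤ k).image r).card :=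
        (Finset.card_image_of_injective _ hinj).symm
    _ = ((Finset.univ.image r).filter fun m => m ≤ k).card := by
        rw [Finset.filter_image]
    _ = ((Finset.Icc 1 (n+1)).filter fun m => m ≤ k).card := by rw [himg]
    _ = (Finset.Icc 1 k).card := by
        congr 1
        ext m
        simp only [Finset.mem_filter, Finset.mem_Icc]
        omega
    _ = k := by rw [Nat.card_Icc]; omega

/-- Split conformal coverage: for exchangeable, a.s. distinct scores,
`1-α ≤ P(S_{n+1} ≤ t̂) ≤ 1-α + 1/(n+1)` where `t̂` is the `⌈(n+1)(1-α)⌉`-th order statistic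
of the first `n` scores. -/
theorem stmt12 {Ω : Type*} [MeasurableSpace Ω] (P : Measure Ω) [IsProbabilityMeasure P]
    (n : ℕ) (hn : 0 < n) (S : Fin (n + 1) → Ω → ℝ) (hS : ∀ i, Measurable (S i))
    (hexch : ∀ σ : Equiv.Perm (Fin (n + 1)),
      Measure.map (fun ω => fun i => S (σ i) ω) P = Measure.map (fun ω => fun i => S i ω) P)
    (hdist : ∀ i j : Fin (n + 1), i ≠ j → P {ω | S i ω = S j ω} = 0)
    (α : ℝ) (hα : α ∈ Set.Ioo (0:ℝ) 1)
    (hk : ⌈((n : ℝ) + 1) * (1 - α)⌉₊ ≤ n) :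
    1 - α ≤ (P {ω | S (Fin.last n) ω
        ≤ orderStat (fun i : Fin n => S i.castSucc ω) ⌈((n : ℝ) + 1) * (1 - α)⌉₊}).toReal ∧
    (P {ω | S (Fin.last n) ω
        ≤ orderStat (fun i : Fin n => S i.castSucc ω) ⌈((n : ℝ) + 1) * (1 - α)⌉₊}).toReal
      ≤ 1 - α + 1 / ((n : ℝ) + 1) := by
  have hα1 := hα.1
  have hα2 := hα.2
  have hc0 : 0 < ((n : ℝ) + 1) * (1 - α) := by
    have h1 : (0:ℝ) < (n : ℝ) + 1 := by positivity
    have h2 : (0:ℝ) < 1 - α := by linarith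
    positivity
  set k : ℕ := ⌈((n : ℝ) + 1) * (1 - α)⌉₊ with hkdef
  have hk1 : 1 ≤ k := Nat.one_le_iff_ne_zero.2 (by
    simp only [hkdef, ne_eq, Nat.ceil_eq_zero, not_le]
    exact hc0)
  -- a.e. injectivity
  have hD : ∀ᵐ ω ∂P, Function.Injective (fun i => S i ω) := by
    have h1 : ∀ᵐ ω ∂P, ∀ i j : Fin (n+1), i ≠ j → S i ω ≠ S j ω := by
      rw [ae_all_iff]
      intro i
      rw [ae_all_iff]
      intro j
      by_cases hij : i = j
      · filter_upwards with ω h; exact absurd hij h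
      · have h0 := hdist i j hij
        rw [ae_iff]
        convert h0 using 2
        ext ω
        simp [hij]
    filter_upwards [h1] with ω hω
    intro i j hij
    by_contra hne
    exact hω i j hne hij
  -- measurability of rank
  have hrank_meas : ∀ j : Fin (n+1), Measurable
      (fun ω => (Finset.univ.filter fun i => S i ω ≤ S j ω).card) := by
    intro j
    have heq : (fun ω => (Finset.univ.filter fun i => S i ω ≤ S j ω).card)
        = fun ω => ∑ i : Fin (n+1), if S i ω ≤ S j ω then 1 else 0 := by
      funext ω; rw [Finset.card_filter]
    rw [heq]
    exact Finset.measurable_sum _ fun i _ =>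
      Measurable.ite (measurableSet_le (hS i) (hS j)) measurable_const measurable_const
  set E : Fin (n+1) → Set Ω :=
    fun j => {ω | (Finset.univ.filter fun i => S i ω ≤ S j ω).card ≤ k} with hE
  have hEmeas : ∀ j, MeasurableSet (E j) := by
    intro j
    have : E j = (fun ω => (Finset.univ.filter fun i => S i ω ≤ S j ω).card) ⁻¹' (Set.Iic k) := by
      ext ω; simp [hE]
    rw [this]
    exact hrank_meas j ((Set.to_countable _).measurableSet)
  -- exchangeability: all E j have the same measure
  have hEeq : ∀ j, P (E j) = P (E (Fin.last n)) := by
    intro j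
    set B : Set (Fin (n+1) → ℝ) :=
      {v | (Finset.univ.filter fun i => v i ≤ v (Fin.last n)).card ≤ k} with hB
    have hrankB : Measurable (fun v : Fin (n+1) → ℝ =>
        (Finset.univ.filter fun i => v i ≤ v (Fin.last n)).card) := by
      have heq : (fun v : Fin (n+1) → ℝ =>
          (Finset.univ.filter fun i => v i ≤ v (Fin.last n)).card)
          = fun v => ∑ i : Fin (n+1), if v i ≤ v (Fin.last n) then 1 else 0 := by
        funext v; rw [Finset.card_filter]
      rw [heq]
      exact Finset.measurable_sum _ fun i _ =>
        Measurable.ite (measurableSet_le (measurable_pi_apply i) (measurable_pi_apply _))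
          measurable_const measurable_const
    have hBmeas : MeasurableSet B := by
      have : B = (fun v : Fin (n+1) → ℝ =>
          (Finset.univ.filter fun i => v i ≤ v (Fin.last n)).card) ⁻¹' (Set.Iic k) := by
        ext v; simp [hB]
      rw [this]
      exact hrankB ((Set.to_countable _).measurableSet)
    set σ : Equiv.Perm (Fin (n+1)) := Equiv.swap j (Fin.last n) with hσ
    have hT : Measurable (fun ω => fun i => S i ω) := measurable_pi_lambda _ fun i => hS i
    have hTσ : Measurable (fun ω => fun i => S (σ i) ω) := measurable_pi_lambda _ fun i => hS (σ i)
    have hmap := congrArg (fun μ : Measure (Fin (n+1) → ℝ) => μ B) (hexch σ)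
    rw [Measure.map_apply hTσ hBmeas, Measure.map_apply hT hBmeas] at hmap
    have hpre1 : (fun ω => fun i => S i ω) ⁻¹' B = E (Fin.last n) := rfl
    have hrei : ∀ (p : Fin (n+1) → Prop),
        (Finset.univ.filter fun i => p (σ i)).card = (Finset.univ.filter p).card := by
      intro p
      have h1 : (Finset.univ.image σ).filter p = (Finset.univ.filter fun i => p (σ i)).image σ :=
        Finset.filter_image
      have h2 : Finset.univ.image σ = Finset.univ := by
        apply Finset.eq_of_subset_of_card_le (Finset.subset_univ _)
        rw [Finset.card_image_of_injective _ σ.injective]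
      rw [h2] at h1
      rw [h1, Finset.card_image_of_injective _ σ.injective]
    have hpre2 : (fun ω => fun i => S (σ i) ω) ⁻¹' B = E j := by
      ext ω
      simp only [hB, Set.mem_preimage, Set.mem_setOf_eq, hE]
      have hσlast : σ (Fin.last n) = j := by simp [hσ, Equiv.swap_apply_right]
      simp only [hσlast]
      rw [hrei (fun i => S i ω ≤ S j ω)]
    rw [hpre1, hpre2] at hmap
    exact hmap
  -- sum of measures equals k
  have hsum : ∑ j : Fin (n+1), P (E j) = (k : ℝ≥0∞) := by
    have hind : ∀ᵐ ω ∂P,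
        ∑ j : Fin (n+1), (E j).indicator (fun _ => (1:ℝ≥0∞)) ω = (k : ℝ≥0∞) := by
      filter_upwards [hD] with ω hω
      have h1 : ∑ j : Fin (n+1), (E j).indicator (fun _ => (1:ℝ≥0∞)) ω
          = ((Finset.univ.filter fun j => ω ∈ E j).card : ℝ≥0∞) := by
        rw [Finset.card_filter]
        push_cast
        refine Finset.sum_congr rfl fun j _ => ?_
        by_cases h : ω ∈ E j <;> simp [h, Set.indicator]
      rw [h1]
      norm_cast
      exact rank_filter_card n k _ hω (by omega)
    calc ∑ j : Fin (n+1), P (E j)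
        = ∑ j : Fin (n+1), ∫⁻ ω, (E j).indicator (fun _ => (1:ℝ≥0∞)) ω ∂P := by
          refine Finset.sum_congr rfl fun j _ => ?_
          rw [lintegral_indicator (hEmeas j), setLIntegral_one]
      _ = ∫⁻ ω, ∑ j : Fin (n+1), (E j).indicator (fun _ => (1:ℝ≥0∞)) ω ∂P :=
          (lintegral_finset_sum _ fun j _ => (measurable_const.indicator (hEmeas j))).symm
      _ = ∫⁻ _, (k : ℝ≥0∞) ∂P := lintegral_congr_ae hind
      _ = (k : ℝ≥0∞) := by simp
  have hconst : ∑ j : Fin (n+1), P (E j) = ((n:ℝ≥0∞) + 1) * P (E (Fin.last n)) := by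
    rw [Finset.sum_congr rfl fun j _ => hEeq j, Finset.sum_const, Finset.card_fin,
      nsmul_eq_mul]
    congr 1
    push_cast
    ring
  have hPE : P (E (Fin.last n)) = (k : ℝ≥0∞) / ((n:ℝ≥0∞) + 1) := by
    rw [ENNReal.eq_div_iff (by simp) (by finiteness)]
    rw [← hconst, hsum]
  -- the stated event equals E (last) a.e.
  have hAE : {ω | S (Fin.last n) ω
      ≤ orderStat (fun i : Fin n => S i.castSucc ω) k} =ᵐ[P] E (Fin.last n) := by
    rw [Filter.eventuallyEq_set]
    filter_upwards [hD] with ω hω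
    simp only [Set.mem_setOf_eq, hE]
    exact orderStat_iff n k (fun i => S i ω) hω hk1 hk
  have hPmain : P {ω | S (Fin.last n) ω
      ≤ orderStat (fun i : Fin n => S i.castSucc ω) k} = (k : ℝ≥0∞) / ((n:ℝ≥0∞) + 1) := by
    rw [measure_congr hAE, hPE]
  rw [hPmain]
  have htoReal : ((k : ℝ≥0∞) / ((n:ℝ≥0∞) + 1)).toReal = (k : ℝ) / ((n:ℝ) + 1) := by
    rw [ENNReal.toReal_div, ENNReal.toReal_add (by finiteness) (by finiteness)]
    simp
  rw [htoReal]
  have hceil1 : ((n : ℝ) + 1) * (1 - α) ≤ (k : ℝ) := Nat.le_ceil _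
  have hceil2 : (k : ℝ) < ((n : ℝ) + 1) * (1 - α) + 1 :=
    Nat.ceil_lt_add_one (le_of_lt hc0)
  have hnp : (0:ℝ) < (n : ℝ) + 1 := by positivity
  constructor
  · rw [le_div_iff₀ hnp]
    calc (1 - α) * ((n:ℝ) + 1) = ((n : ℝ) + 1) * (1 - α) := by ring
      _ ≤ (k : ℝ) := hceil1
  · rw [div_le_iff₀ hnp]
    have : (1 - α + 1 / ((n : ℝ) + 1)) * ((n:ℝ) + 1) = ((n : ℝ) + 1) * (1 - α) + 1 := by
      field_simp
    rw [this]
    exact le_of_lt hceil2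
end

section
/- Suppose the residual R = Y − μ(X), where μ(x) = E[Y | X = x], is independent of X and has a density that is symmetric about 0 and nonincreasing on [0, ∞) (unimodal at 0). Then for every measurable f, Q(1−α; |Y − f(X)|) ≥ Q(1−α; |Y − μ(X)|); i.e., the conditional mean μ minimizes the (1−α)-quantile of the absolute error over all measurable predictors, for every α ∈ (0,1). -/
open MeasureTheory ProbabilityTheory Real

lemma pabs (p : ℝ → ℝ) (hsymm : ∀ u : ℝ, p (-u) = p u) (u : ℝ) : p u = p |u| := by
  rcases le_or_gt 0 u with h | h
  · rw [abs_of_nonneg h]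
  · rw [abs_of_neg h, hsymm]

/-- Anderson-type lemma in dimension 1: shifting a symmetric unimodal density
decreases the mass of symmetric intervals. -/
lemma key_shift (p : ℝ → ℝ) (hp : Measurable p) (hp0 : ∀ u, 0 ≤ p u)
    (hsymm : ∀ u : ℝ, p (-u) = p u) (hmono : AntitoneOn p (Set.Ici (0:ℝ)))
    {t : ℝ} (ht : 0 ≤ t) (c : ℝ) :
    ∫⁻ u in Set.Icc (-t - c) (t - c), ENNReal.ofReal (p u)
      ≤ ∫⁻ u in Set.Icc (-t) t, ENNReal.ofReal (p u) := by
  set A := Set.Icc (-t - c) (t - c) with hAdef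
  set B := Set.Icc (-t) t with hBdef
  have hA : MeasurableSet A := measurableSet_Icc
  have hB : MeasurableSet B := measurableSet_Icc
  set g : ℝ → ENNReal := fun u => ENNReal.ofReal (p u) with hgdef
  have hg : Measurable g := hp.ennreal_ofReal
  -- pointwise bounds
  have hout : ∀ u : ℝ, u ∉ B → p u ≤ p t := by
    intro u hu
    have habs : t < |u| := by
      by_contra h
      push_neg at h
      exact hu (abs_le.mp h)
    rw [pabs p hsymm u]
    exact hmono ht (le_trans ht habs.le) habs.le
  have hin : ∀ u : ℝ, u ∈ B → p t ≤ p u := by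
    intro u hu
    have habs : |u| ≤ t := abs_le.mpr hu
    rw [pabs p hsymm u]
    exact hmono (abs_nonneg u) ht habs
  -- volumes
  have hvolA : volume A = ENNReal.ofReal (2 * t) := by
    rw [hAdef, Real.volume_Icc]; ring_nf
  have hvolB : volume B = ENNReal.ofReal (2 * t) := by
    rw [hBdef, Real.volume_Icc]; ring_nf
  have hABfin : volume (A ∩ B) ≠ ⊤ := by
    refine ne_top_of_le_ne_top ?_ (measure_mono Set.inter_subset_left)
    rw [hvolA]; exact ENNReal.ofReal_ne_top
  have hdiffs : volume (A \ B) = volume (B \ A) := by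
    have h1 : volume (A ∩ B) + volume (A \ B) = volume A := measure_inter_add_diff A hB
    have h2 : volume (A ∩ B) + volume (B \ A) = volume B := by
      rw [Set.inter_comm]; exact measure_inter_add_diff B hA
    have : volume (A ∩ B) + volume (A \ B) = volume (A ∩ B) + volume (B \ A) := by
      rw [h1, h2, hvolA, hvolB]
    exact (ENNReal.add_right_inj hABfin).mp this
  -- integral bounds on the difference sets
  have hintA : ∫⁻ u in A \ B, g u ≤ ENNReal.ofReal (p t) * volume (A \ B) := by
    calc ∫⁻ u in A \ B, g u ≤ ∫⁻ _ in A \ B, ENNReal.ofReal (p t) := by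
          refine setLIntegral_mono measurable_const ?_
          intro u hu
          exact ENNReal.ofReal_le_ofReal (hout u hu.2)
      _ = ENNReal.ofReal (p t) * volume (A \ B) := by
          rw [setLIntegral_const]
  have hintB : ENNReal.ofReal (p t) * volume (B \ A) ≤ ∫⁻ u in B \ A, g u := by
    calc ENNReal.ofReal (p t) * volume (B \ A)
        = ∫⁻ _ in B \ A, ENNReal.ofReal (p t) := by rw [setLIntegral_const]
      _ ≤ ∫⁻ u in B \ A, g u := by
          refine setLIntegral_mono hg ?_
          intro u hu
          exact ENNReal.ofReal_le_ofReal (hin u hu.1)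
  -- split and conclude
  have hsplitA : ∫⁻ u in A, g u = (∫⁻ u in A ∩ B, g u) + ∫⁻ u in A \ B, g u := by
    rw [← lintegral_union (hA.diff hB)
      (Set.disjoint_sdiff_right.mono_left Set.inter_subset_right), Set.inter_union_diff]
  have hsplitB : ∫⁻ u in B, g u = (∫⁻ u in A ∩ B, g u) + ∫⁻ u in B \ A, g u := by
    rw [Set.inter_comm]
    rw [← lintegral_union (hB.diff hA)
      (Set.disjoint_sdiff_right.mono_left Set.inter_subset_right), Set.inter_union_diff]
  calc ∫⁻ u in A, g u = (∫⁻ u in A ∩ B, g u) + ∫⁻ u in A \ B, g u := hsplitA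
    _ ≤ (∫⁻ u in A ∩ B, g u) + ENNReal.ofReal (p t) * volume (A \ B) := by
        exact add_le_add_right hintA _
    _ = (∫⁻ u in A ∩ B, g u) + ENNReal.ofReal (p t) * volume (B \ A) := by rw [hdiffs]
    _ ≤ (∫⁻ u in A ∩ B, g u) + ∫⁻ u in B \ A, g u := add_le_add_right hintB _
    _ = ∫⁻ u in B, g u := hsplitB.symm

/-- If the residual `R = Y - μ(X)` is independent of `X` with a density symmetric about `0`
and nonincreasing on `[0,∞)`, then `μ` minimizes the `(1-α)`-quantile of the absolute error
over all measurable predictors, for every `α ∈ (0,1)`. -/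
theorem stmt18 {Ω 𝒳 : Type*} [MeasurableSpace Ω] [MeasurableSpace 𝒳]
    (P : Measure Ω) [IsProbabilityMeasure P]
    (X : Ω → 𝒳) (Y : Ω → ℝ) (hX : Measurable X) (hY : Measurable Y)
    (μfun : 𝒳 → ℝ) (hμ : Measurable μfun)
    (hindep : IndepFun (fun ω => Y ω - μfun (X ω)) X P)
    (p : ℝ → ℝ) (hp : Measurable p) (hp0 : ∀ u, 0 ≤ p u)
    (hdens : Measure.map (fun ω => Y ω - μfun (X ω)) P
      = volume.withDensity (fun u => ENNReal.ofReal (p u)))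
    (hsymm : ∀ u : ℝ, p (-u) = p u)
    (hmono : AntitoneOn p (Set.Ici (0:ℝ))) :
    ∀ α ∈ Set.Ioo (0:ℝ) 1, ∀ f : 𝒳 → ℝ, Measurable f →
      qf P (fun ω => |Y ω - μfun (X ω)|) (1 - α)
        ≤ qf P (fun ω => |Y ω - f (X ω)|) (1 - α) := by
  intro α hα f hf
  set q : ℝ := 1 - α with hqdef
  have hq0 : 0 < q := by simp [hqdef]; linarith [hα.2]
  have hq1 : q < 1 := by simp [hqdef]; exact hα.1
  set R : Ω → ℝ := fun ω => Y ω - μfun (X ω) with hRdef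
  have hR : Measurable R := hY.sub (hμ.comp hX)
  set c : 𝒳 → ℝ := fun x => μfun x - f x with hcdef
  have hc : Measurable c := hμ.sub hf
  haveI : IsProbabilityMeasure (Measure.map X P) := Measure.isProbabilityMeasure_map hX.aemeasurable
  haveI : IsProbabilityMeasure (Measure.map R P) := Measure.isProbabilityMeasure_map hR.aemeasurable
  have hpair : Measure.map (fun ω => (X ω, R ω)) P = (Measure.map X P).prod (Measure.map R P) :=
    (indepFun_iff_map_prod_eq_prod_map_map hX.aemeasurable hR.aemeasurable).mp hindep.symm
  -- the slice set identity
  have hslice : ∀ (a t : ℝ), {r : ℝ | |r + a| ≤ t} = Set.Icc (-t - a) (t - a) := by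
    intro a t
    ext r
    simp only [Set.mem_setOf_eq, Set.mem_Icc, abs_le]
    constructor <;> intro h <;> constructor <;> linarith [h.1, h.2]
  -- key probability comparison for t ≥ 0
  have hmain : ∀ t : ℝ, 0 ≤ t →
      P {ω | |Y ω - f (X ω)| ≤ t} ≤ P {ω | |R ω| ≤ t} := by
    intro t ht
    have hset : {ω | |Y ω - f (X ω)| ≤ t} = {ω | |R ω + c (X ω)| ≤ t} := by
      ext ω
      have : Y ω - f (X ω) = R ω + c (X ω) := by simp only [hRdef, hcdef]; ring
      simp [this]
    rw [hset]
    set S : Set (𝒳 × ℝ) := {q : 𝒳 × ℝ | |q.2 + c q.1| ≤ t} with hSdef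
    have hS : MeasurableSet S :=
      measurableSet_le ((measurable_snd.add (hc.comp measurable_fst)).abs) measurable_const
    have h1 : P {ω | |R ω + c (X ω)| ≤ t} = ((Measure.map X P).prod (Measure.map R P)) S := by
      rw [← hpair, Measure.map_apply (hX.prodMk hR) hS]
      rfl
    rw [h1, Measure.prod_apply hS]
    have h2 : ∀ x : 𝒳, (Measure.map R P) (Prod.mk x ⁻¹' S) ≤ (Measure.map R P) {r : ℝ | |r| ≤ t} := by
      intro x
      have hpre : Prod.mk x ⁻¹' S = Set.Icc (-t - c x) (t - c x) := by
        rw [← hslice (c x) t]; rfl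
      have habs : {r : ℝ | |r| ≤ t} = Set.Icc (-t) t := by
        ext r; simp [abs_le]
      rw [hpre, habs, hdens, withDensity_apply _ measurableSet_Icc,
        withDensity_apply _ measurableSet_Icc]
      exact key_shift p hp hp0 hsymm hmono ht (c x)
    have hms : MeasurableSet {r : ℝ | |r| ≤ t} := by
      have : {r : ℝ | |r| ≤ t} = Set.Icc (-t) t := by ext r; simp [abs_le]
      rw [this]; exact measurableSet_Icc
    calc ∫⁻ x, (Measure.map R P) (Prod.mk x ⁻¹' S) ∂(Measure.map X P)
        ≤ ∫⁻ _, (Measure.map R P) {r : ℝ | |r| ≤ t} ∂(Measure.map X P) := lintegral_mono h2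
      _ = (Measure.map R P) {r : ℝ | |r| ≤ t} := by simp
      _ = P {ω | |R ω| ≤ t} := by
          rw [Measure.map_apply hR hms]
          rfl
  -- quantile comparison
  unfold qf
  have hsub : {t : ℝ | q ≤ (P {ω | |Y ω - f (X ω)| ≤ t}).toReal}
      ⊆ {t : ℝ | q ≤ (P {ω | |Y ω - μfun (X ω)| ≤ t}).toReal} := by
    intro t hts
    simp only [Set.mem_setOf_eq] at hts ⊢
    have ht : 0 ≤ t := by
      by_contra h
      push_neg at h
      have : {ω | |Y ω - f (X ω)| ≤ t} = ∅ := by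
        ext ω
        simp only [Set.mem_setOf_eq, Set.mem_empty_iff_false, iff_false]
        intro hle
        exact absurd (le_trans (abs_nonneg _) hle) (not_le.mpr h)
      rw [this] at hts
      simp at hts
      linarith
    have := hmain t ht
    calc q ≤ (P {ω | |Y ω - f (X ω)| ≤ t}).toReal := hts
      _ ≤ (P {ω | |R ω| ≤ t}).toReal := ENNReal.toReal_mono (measure_ne_top P _) this
      _ = (P {ω | |Y ω - μfun (X ω)| ≤ t}).toReal := rfl
  have hbdd : BddBelow {t : ℝ | q ≤ (P {ω | |Y ω - μfun (X ω)| ≤ t}).toReal} := by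
    refine ⟨0, fun t hts => ?_⟩
    by_contra h
    push_neg at h
    have : {ω | |Y ω - μfun (X ω)| ≤ t} = ∅ := by
      ext ω
      simp only [Set.mem_setOf_eq, Set.mem_empty_iff_false, iff_false]
      intro hle
      exact absurd (le_trans (abs_nonneg _) hle) (not_le.mpr h)
    simp only [Set.mem_setOf_eq, this] at hts
    simp at hts
    linarith
  have hne : {t : ℝ | q ≤ (P {ω | |Y ω - f (X ω)| ≤ t}).toReal}.Nonempty := by
    set s : ℕ → Set Ω := fun n => {ω | |Y ω - f (X ω)| ≤ (n : ℝ)} with hsdef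
    have hmonos : Monotone s := by
      intro m n hmn ω hω
      simp only [hsdef, Set.mem_setOf_eq] at hω ⊢
      exact le_trans hω (Nat.cast_le.mpr hmn)
    have hunion : ⋃ n, s n = Set.univ := by
      ext ω
      simp only [Set.mem_iUnion, Set.mem_univ, iff_true]
      obtain ⟨n, hn⟩ := exists_nat_ge (|Y ω - f (X ω)|)
      exact ⟨n, hn⟩
    have hsup : ⨆ n, P (s n) = 1 := by
      rw [← hmonos.directed_le.measure_iUnion, hunion, measure_univ]
    have : ENNReal.ofReal q < ⨆ n, P (s n) := by
      rw [hsup]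
      exact lt_of_lt_of_le (ENNReal.ofReal_lt_one.mpr hq1) le_rfl
    obtain ⟨n, hn⟩ := lt_iSup_iff.mp this
    refine ⟨(n : ℝ), ?_⟩
    simp only [Set.mem_setOf_eq]
    have h2 := ENNReal.toReal_mono (measure_ne_top P _) hn.le
    rwa [ENNReal.toReal_ofReal hq0.le] at h2
  exact csInf_le_csInf hbdd hne hsub
end
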